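/- arXiv:1706.01008 — 13 statements merged into one kernel-verified Lean document; each statement's English description precedes it below -/
import Mathlib

section
/- Let n > 1 be a positive integer with prime factorization n = ∏_{i=1}^ℓ p_i^{a_i}, where p_1 < p_2 < ⋯ < p_ℓ are the distinct prime divisors of n. Then F_n = D_n if and only if p_i − 1 = ∏_{j=1}^{i−1} p_j^{a_j} for every 1 ≤ i ≤ ℓ (in particular, for i = 1 this forces p_1 = 2). -/
/-- The map `f` from the paper: `f n = n - 1` if `n` is prime, and otherwise
`f n = n - d n` where `d n = n / n.minFac` is the largest divisor `d` of `n`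
with `1 < d < n`. -/
def egf (n : ℕ) : ℕ := if n.Prime then n - 1 else n - n / n.minFac

/-- `F n = {n, f n, f (f n), …, 1}`: the set of iterates of `f` starting at `n`
(the iterates strictly decrease to `1`; we collect all positive iterates). -/
def Fset (n : ℕ) : Set ℕ := {m | 0 < m ∧ ∃ i : ℕ, egf^[i] n = m}

/-- The sum `∑_{p^k ∣ n} 1/p^k` over all prime power divisors `p^k` of `n`. -/
def ppSum (n : ℕ) : ℚ := ∑ d ∈ n.divisors.filter (fun d => IsPrimePow d), (1 : ℚ) / d

/-- A prime power pseudoperfect number: `n > 1` with `∑_{p^k ∣ n} 1/p^k + 1/n = 1`. -/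
def PPPseudoperfect (n : ℕ) : Prop := 1 < n ∧ ppSum n + 1 / n = 1

/-- A prime power Giuga number: a composite `n` with `∑_{p^k ∣ n} 1/p^k - 1/n` a positive integer. -/
def PPGiuga (n : ℕ) : Prop :=
  1 < n ∧ ¬ n.Prime ∧ ∃ m : ℕ, 0 < m ∧ ppSum n - 1 / n = m

/-- A primary pseudoperfect number: `n > 1` with `∑_{p ∣ n} 1/p + 1/n = 1`. -/
def PrimaryPseudoperfect (n : ℕ) : Prop :=
  1 < n ∧ (∑ p ∈ n.primeFactors, (1 : ℚ) / p) + 1 / n = 1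

/-- A Giuga number: a composite `n` with `∑_{p ∣ n} 1/p - 1/n` a positive integer. -/
def Giuga (n : ℕ) : Prop :=
  1 < n ∧ ¬ n.Prime ∧ ∃ m : ℕ, 0 < m ∧ (∑ p ∈ n.primeFactors, (1 : ℚ) / p) - 1 / n = m

/-- A pseudoperfect number: a positive integer that is the sum of a nonempty set of
distinct divisors `d` with `0 < d < n`. -/
def Pseudoperfect (n : ℕ) : Prop :=
  0 < n ∧ ∃ s : Finset ℕ, s ⊆ n.properDivisors ∧ s.Nonempty ∧ ∑ d ∈ s, d = n

def Mf (n p : ℕ) : ℕ := ∏ q ∈ n.primeFactors.filter (· < p), q ^ n.factorization q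

lemma Mf_pos (n p : ℕ) : 0 < Mf n p := by
  apply Finset.prod_pos
  intro q hq
  simp only [Finset.mem_filter, Nat.mem_primeFactors] at hq
  exact pow_pos hq.1.1.pos _

lemma factorization_Mf (n p : ℕ) (r : ℕ) :
    (Mf n p).factorization r =
      if r ∈ n.primeFactors.filter (· < p) then n.factorization r else 0 := by
  rw [Mf, Nat.factorization_prod]
  · rw [Finsupp.finset_sum_apply]
    by_cases h : r ∈ n.primeFactors.filter (· < p)
    · rw [if_pos h, Finset.sum_eq_single_of_mem r h]
      · simp only [Finset.mem_filter, Nat.mem_primeFactors] at h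
        rw [h.1.1.factorization_pow]; simp
      · intro q hq hqr
        simp only [Finset.mem_filter, Nat.mem_primeFactors] at hq
        rw [hq.1.1.factorization_pow]
        rw [Finsupp.single_apply, if_neg hqr]
    · rw [if_neg h, Finset.sum_eq_zero]
      intro q hq
      simp only [Finset.mem_filter, Nat.mem_primeFactors] at hq
      rw [hq.1.1.factorization_pow, Finsupp.single_apply, if_neg]
      rintro rfl; exact h (by simp [Finset.mem_filter, Nat.mem_primeFactors, hq.1, hq.2])
  · intro q hq
    simp only [Finset.mem_filter, Nat.mem_primeFactors] at hq
    exact pow_ne_zero _ hq.1.1.pos.ne'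

lemma Mf_dvd (n p : ℕ) (hn : n ≠ 0) : Mf n p ∣ n := by
  rw [← Nat.factorization_le_iff_dvd (Mf_pos n p).ne' hn, Finsupp.le_def]
  intro r
  rw [factorization_Mf]
  split <;> simp

lemma prime_dvd_Mf_lt {n p r : ℕ} (hr : r.Prime) (h : r ∣ Mf n p) : r < p := by
  have := hr.factorization_pos_of_dvd (Mf_pos n p).ne' h
  rw [factorization_Mf] at this
  by_contra hrp
  rw [if_neg] at this
  · simp at this
  · simp only [Finset.mem_filter]; tauto

lemma dvd_Mf {n p x : ℕ} (hn : n ≠ 0) (hx : x ∣ n) (h : ∀ q, q.Prime → q ∣ x → q < p) :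
    x ∣ Mf n p := by
  have hx0 : x ≠ 0 := fun h0 => hn (by simpa [h0] using hx)
  rw [← Nat.factorization_le_iff_dvd hx0 (Mf_pos n p).ne', Finsupp.le_def]
  intro r
  rw [factorization_Mf]
  by_cases hrx : x.factorization r = 0
  · simp [hrx]
  · have hr : r ∈ x.primeFactors := Nat.support_factorization x ▸ Finsupp.mem_support_iff.mpr hrx
    rw [Nat.mem_primeFactors] at hr
    rw [if_pos]
    · exact (Nat.factorization_le_iff_dvd hx0 hn).mpr hx r
    · simp only [Finset.mem_filter, Nat.mem_primeFactors]
      exact ⟨⟨hr.1, hr.2.1.trans hx, hn⟩, h r hr.1 hr.2.1⟩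

lemma egf_eq {d : ℕ} (hd : 1 < d) : egf d = d - d / d.minFac := by
  unfold egf
  split
  · rename_i h; rw [Nat.Prime.minFac_eq h, Nat.div_self (by omega)]
  · rfl

lemma egf_eq_mul {d : ℕ} (hd : 1 < d) : egf d = (d / d.minFac) * (d.minFac - 1) := by
  rw [egf_eq hd, Nat.mul_sub, mul_one, Nat.div_mul_cancel (Nat.minFac_dvd d)]

lemma egf_lt {d : ℕ} (hd : 1 < d) : egf d < d := by
  rw [egf_eq hd]
  have h1 : 0 < d / d.minFac := Nat.div_pos (Nat.minFac_le (by omega)) (Nat.minFac_pos d)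
  omega

lemma egf_pos {d : ℕ} (hd : 1 < d) : 0 < egf d := by
  rw [egf_eq_mul hd]
  have h1 : 0 < d / d.minFac := Nat.div_pos (Nat.minFac_le (by omega)) (Nat.minFac_pos d)
  have h2 : 1 < d.minFac := (Nat.minFac_prime (by omega)).one_lt
  exact Nat.mul_pos h1 (by omega)

lemma egf_le (m : ℕ) : egf m ≤ m := by
  unfold egf; split <;> exact Nat.sub_le _ _

lemma iter_egf_anti (n : ℕ) : ∀ {i j : ℕ}, i ≤ j → egf^[j] n ≤ egf^[i] n := by
  intro i j h
  obtain ⟨k, rfl⟩ := Nat.le.dest h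
  clear h
  induction k with
  | zero => rfl
  | succ k ih =>
    have : egf^[i + (k+1)] n = egf (egf^[i+k] n) := by
      rw [show i + (k+1) = (i+k) + 1 from rfl, Function.iterate_succ_apply' egf (i+k) n]
    rw [this]
    exact le_trans (egf_le _) ih

section Cond
variable {n : ℕ} (hn : 1 < n)
  (hc : ∀ p ∈ n.primeFactors, p - 1 = Mf n p)

include hn hc in
lemma egf_dvd_of_cond {d : ℕ} (hd : d ∣ n) (hd1 : 1 < d) : egf d ∣ n := by
  set q := d.minFac with hq
  have hqp : q.Prime := Nat.minFac_prime (by omega)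
  have hqd : q ∣ d := Nat.minFac_dvd d
  have hqn : q ∈ n.primeFactors := Nat.mem_primeFactors.mpr ⟨hqp, hqd.trans hd, by omega⟩
  have hdq : d / q ∣ n := (Nat.div_dvd_of_dvd hqd).trans hd
  have hcop : Nat.Coprime (d / q) (Mf n q) := by
    by_contra hcc
    obtain ⟨r, hr, hr1, hr2⟩ := Nat.Prime.not_coprime_iff_dvd.mp hcc
    have h1 : r < q := prime_dvd_Mf_lt hr hr2
    have h2 : q ≤ r := Nat.minFac_le_of_dvd hr.two_le (hr1.trans (Nat.div_dvd_of_dvd hqd))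
    omega
  rw [egf_eq_mul hd1, show d.minFac - 1 = Mf n q from (hc q hqn) ▸ rfl]
  exact hcop.mul_dvd_of_dvd_of_dvd hdq (Mf_dvd n q (by omega))

include hn hc in
lemma le_egf_of_cond {d e : ℕ} (hd : d ∣ n) (hd1 : 1 < d) (he : e ∣ n) (hed : e < d) :
    e ≤ egf d := by
  have hn0 : n ≠ 0 := by omega
  have hd0 : d ≠ 0 := fun h => hn0 (by simpa [h] using hd)
  have he0 : e ≠ 0 := fun h => hn0 (by simpa [h] using he)
  -- the set of primes where d and e differ
  set S := n.primeFactors.filter (fun p => d.factorization p ≠ e.factorization p) with hS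
  have hSne : S.Nonempty := by
    by_contra hSe
    rw [Finset.not_nonempty_iff_eq_empty] at hSe
    have heq : ∀ p, d.factorization p = e.factorization p := by
      intro p
      by_cases hp : p ∈ n.primeFactors
      · by_contra hne
        have : p ∈ S := Finset.mem_filter.mpr ⟨hp, hne⟩
        simp [hSe] at this
      · have h1 : d.factorization p = 0 := by
          by_contra h
          exact hp (Nat.primeFactors_mono hd hn0
            (Nat.support_factorization d ▸ Finsupp.mem_support_iff.mpr h))
        have h2 : e.factorization p = 0 := by
          by_contra h
          exact hp (Nat.primeFactors_mono he hn0
            (Nat.support_factorization e ▸ Finsupp.mem_support_iff.mpr h))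
        rw [h1, h2]
    have : d = e := by
      have h1 : d ∣ e := (Nat.factorization_le_iff_dvd hd0 he0).mp
        (Finsupp.le_def.mpr fun p => (heq p).le)
      have h2 : e ∣ d := (Nat.factorization_le_iff_dvd he0 hd0).mp
        (Finsupp.le_def.mpr fun p => (heq p).ge)
      exact Nat.dvd_antisymm h1 h2
    omega
  set r := S.max' hSne with hr
  have hrS : r ∈ S := S.max'_mem hSne
  have hrmax : ∀ p ∈ S, p ≤ r := fun p hp => S.le_max' p hp
  have hrn : r ∈ n.primeFactors := (Finset.mem_filter.mp hrS).1
  have hrne : d.factorization r ≠ e.factorization r := (Finset.mem_filter.mp hrS).2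
  have hrp : r.Prime := (Nat.mem_primeFactors.mp hrn).1
  have hr1 : 1 < r := hrp.one_lt
  have htopeq : ∀ p ∈ n.primeFactors.filter (fun p => r < p),
      d.factorization p = e.factorization p := by
    intro p hp
    obtain ⟨hp1, hp2⟩ := Finset.mem_filter.mp hp
    by_contra hne
    have := hrmax p (Finset.mem_filter.mpr ⟨hp1, hne⟩)
    omega
  -- the splitting of a divisor
  have split : ∀ x : ℕ, x ∣ n → x =
      r ^ x.factorization r *
      ((∏ p ∈ n.primeFactors.filter (· < r), p ^ x.factorization p) *
       (∏ p ∈ n.primeFactors.filter (fun p => r < p), p ^ x.factorization p)) := by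
    intro x hx
    have hx0 : x ≠ 0 := fun h => hn0 (by simpa [h] using hx)
    have e1 : x = ∏ p ∈ x.primeFactors, p ^ x.factorization p :=
      (Nat.factorization_prod_pow_eq_self hx0).symm
    have e2 : x = ∏ p ∈ n.primeFactors, p ^ x.factorization p := by
      conv_lhs => rw [e1]
      refine Finset.prod_subset (Nat.primeFactors_mono hx hn0) ?_
      intro p _ hpx
      have : x.factorization p = 0 :=
        Finsupp.notMem_support_iff.mp (Nat.support_factorization x ▸ hpx)
      rw [this, pow_zero]
    conv_lhs => rw [e2]
    rw [← Finset.mul_prod_erase _ _ hrn]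
    congr 1
    rw [← Finset.prod_filter_mul_prod_filter_not (n.primeFactors.erase r) (· < r)]
    congr 1
    · apply Finset.prod_congr _ (fun _ _ => rfl)
      ext p
      simp only [Finset.mem_filter, Finset.mem_erase]
      constructor
      · rintro ⟨⟨hp1, hp2⟩, hp3⟩; exact ⟨hp2, hp3⟩
      · rintro ⟨hp1, hp2⟩; exact ⟨⟨by omega, hp1⟩, hp2⟩
    · apply Finset.prod_congr _ (fun _ _ => rfl)
      ext p
      simp only [Finset.mem_filter, Finset.mem_erase]
      constructor
      · rintro ⟨⟨hp1, hp2⟩, hp3⟩; exact ⟨hp2, by omega⟩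
      · rintro ⟨hp1, hp2⟩; exact ⟨⟨by omega, hp1⟩, by omega⟩
  -- names
  set b := d.factorization r with hb
  set c := e.factorization r with hcdef
  set T := ∏ p ∈ n.primeFactors.filter (fun p => r < p), p ^ d.factorization p with hT
  set Ld := ∏ p ∈ n.primeFactors.filter (· < r), p ^ d.factorization p with hLd
  set Le := ∏ p ∈ n.primeFactors.filter (· < r), p ^ e.factorization p with hLe
  have heT : (∏ p ∈ n.primeFactors.filter (fun p => r < p), p ^ e.factorization p) = T :=
    (Finset.prod_congr rfl (fun p hp => by rw [htopeq p hp])).symm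
  have hdsplit : d = r ^ b * (Ld * T) := split d hd
  have hesplit : e = r ^ c * (Le * T) := by rw [split e he, heT]
  have hTpos : 0 < T := by
    apply Finset.prod_pos; intro p hp
    exact pow_pos (Nat.mem_primeFactors.mp (Finset.mem_filter.mp hp).1).1.pos _
  have hLdpos : 0 < Ld := by
    apply Finset.prod_pos; intro p hp
    exact pow_pos (Nat.mem_primeFactors.mp (Finset.mem_filter.mp hp).1).1.pos _
  have hLepos : 0 < Le := by
    apply Finset.prod_pos; intro p hp
    exact pow_pos (Nat.mem_primeFactors.mp (Finset.mem_filter.mp hp).1).1.pos _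
  have hfle : ∀ x : ℕ, x ∣ n → x ≠ 0 →
      (∏ p ∈ n.primeFactors.filter (· < r), p ^ x.factorization p) ≤ r - 1 := by
    intro x hx hx0
    have hdvd : (∏ p ∈ n.primeFactors.filter (· < r), p ^ x.factorization p) ∣ Mf n r := by
      apply Finset.prod_dvd_prod_of_dvd
      intro p hp
      exact pow_dvd_pow p ((Nat.factorization_le_iff_dvd hx0 hn0).mpr hx p)
    have := Nat.le_of_dvd (Mf_pos n r) hdvd
    rwa [← hc r hrn] at this
  have hLdle : Ld ≤ r - 1 := hfle d hd hd0
  have hLele : Le ≤ r - 1 := hfle e he he0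
  rcases Nat.lt_or_ge b c with hbc | hbc
  · -- b < c : contradiction with e < d
    exfalso
    have h1 : d ≤ r ^ b * ((r - 1) * T) := by
      rw [hdsplit]
      exact Nat.mul_le_mul_left _ (Nat.mul_le_mul_right _ hLdle)
    have h2 : r ^ b * ((r - 1) * T) < r ^ b * (r * T) := by
      have hA : 0 < r ^ b := pow_pos (by omega) b
      have hBC : (r - 1) * T < r * T := by
        apply Nat.mul_lt_mul_of_lt_of_le (by omega) (le_refl T) hTpos
      exact (Nat.mul_lt_mul_left hA).mpr hBC
    have h5 : r ^ c * T ≤ e := by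
      rw [hesplit]
      calc r ^ c * T = r ^ c * (1 * T) := by ring
        _ ≤ r ^ c * (Le * T) := Nat.mul_le_mul_left _ (Nat.mul_le_mul_right _ hLepos)
    have : d < e := by
      calc d ≤ r ^ b * ((r - 1) * T) := h1
        _ < r ^ b * (r * T) := h2
        _ = r ^ (b + 1) * T := by ring
        _ ≤ r ^ c * T := Nat.mul_le_mul_right _ (Nat.pow_le_pow_right (by omega) (by omega))
        _ ≤ e := h5
    omega
  · -- c < b
    have hcb : c < b := by omega
    have hb1 : 1 ≤ b := by omega
    have heub : e ≤ r ^ (b - 1) * ((r - 1) * T) := by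
      calc e = r ^ c * (Le * T) := hesplit
        _ ≤ r ^ (b-1) * (Le * T) :=
          Nat.mul_le_mul_right _ (Nat.pow_le_pow_right (by omega) (by omega))
        _ ≤ r ^ (b-1) * ((r-1) * T) := Nat.mul_le_mul_left _ (Nat.mul_le_mul_right _ hLele)
    set q := d.minFac with hq
    have hqp : q.Prime := Nat.minFac_prime (by omega)
    have hqd : q ∣ d := Nat.minFac_dvd d
    have hrd : r ∣ d := Nat.dvd_of_factorization_pos (by omega)
    have hqr : q ≤ r := Nat.minFac_le_of_dvd hrp.two_le hrd
    rcases eq_or_lt_of_le hqr with hqe | hqlt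
    · -- q = r : Ld = 1
      have hLd1 : Ld = 1 := by
        apply Finset.prod_eq_one
        intro p hp
        obtain ⟨hp1, hp2⟩ := Finset.mem_filter.mp hp
        have hpp : p.Prime := (Nat.mem_primeFactors.mp hp1).1
        have : d.factorization p = 0 := by
          by_contra h
          have hpd : p ∣ d := Nat.dvd_of_factorization_pos h
          have := Nat.minFac_le_of_dvd hpp.two_le hpd
          omega
        rw [this, pow_zero]
      have hdeq : d = r ^ b * T := by rw [hdsplit, hLd1, one_mul]
      have hdr : d / r = r ^ (b-1) * T := by
        rw [hdeq, show b = (b-1) + 1 by omega, pow_succ]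
        rw [show r ^ (b-1) * r * T = r * (r ^ (b-1) * T) by ring]
        exact Nat.mul_div_cancel_left _ (by omega)
      rw [egf_eq_mul hd1, ← hq, hqe, hdr]
      calc e ≤ r ^ (b-1) * ((r-1) * T) := heub
        _ = r ^ (b-1) * T * (r - 1) := by ring
    · -- q < r
      have hqLd : q ∣ Ld := by
        have hq1 : d.factorization q ≠ 0 := by
          have := hqp.factorization_pos_of_dvd hd0 hqd
          omega
        have hqnn : q ∈ n.primeFactors.filter (· < r) :=
          Finset.mem_filter.mpr ⟨Nat.mem_primeFactors.mpr ⟨hqp, hqd.trans hd, hn0⟩, hqlt⟩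
        exact dvd_trans (dvd_pow_self q hq1) (Finset.dvd_prod_of_mem _ hqnn)
      obtain ⟨k, hk⟩ := hqLd
      have hkpos : 0 < k := by
        rcases Nat.eq_zero_or_pos k with h | h
        · rw [h, mul_zero] at hk; omega
        · exact h
      have hdq : d / q = r ^ b * (k * T) := by
        rw [hdsplit, hk, show r ^ b * (q * k * T) = q * (r ^ b * (k * T)) by ring]
        exact Nat.mul_div_cancel_left _ hqp.pos
      have h1 : e ≤ r ^ b * T := by
        calc e ≤ r ^ (b-1) * ((r-1) * T) := heub
          _ ≤ r ^ (b-1) * (r * T) :=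
            Nat.mul_le_mul_left _ (Nat.mul_le_mul_right _ (by omega))
          _ = r ^ (b-1) * r * T := by ring
          _ = r ^ b * T := by rw [← pow_succ, show b - 1 + 1 = b by omega]
      have h2 : r ^ b * T ≤ d / q := by
        rw [hdq]
        calc r ^ b * T = r ^ b * (1 * T) := by ring
          _ ≤ r ^ b * (k * T) := Nat.mul_le_mul_left _ (Nat.mul_le_mul_right _ hkpos)
      have h3 : d / q ≤ (d / q) * (q - 1) := by
        have : 1 ≤ q - 1 := by have := hqp.two_le; omega
        calc d / q = (d / q) * 1 := by ring
          _ ≤ (d / q) * (q - 1) := Nat.mul_le_mul_left _ this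
      rw [egf_eq_mul hd1, ← hq]
      omega

lemma egf_zero : egf 0 = 0 := by unfold egf; simp [Nat.not_prime_zero]
lemma egf_one : egf 1 = 0 := by unfold egf; norm_num

include hn hc in
lemma Fset_eq_divisors_of_cond : Fset n = (n.divisors : Set ℕ) := by
  have hn0 : n ≠ 0 := by omega
  apply Set.eq_of_subset_of_subset
  · -- Fset ⊆ divisors
    have key : ∀ i : ℕ, egf^[i] n ∣ n ∨ egf^[i] n = 0 := by
      intro i
      induction i with
      | zero => exact Or.inl dvd_rfl
      | succ i ih =>
        rw [Function.iterate_succ_apply']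
        rcases ih with h | h
        · have hpos : 1 ≤ egf^[i] n := Nat.one_le_iff_ne_zero.mpr
            (fun h0 => hn0 (by simpa [h0] using h))
          rcases Nat.lt_or_ge 1 (egf^[i] n) with h1 | h1
          · exact Or.inl (egf_dvd_of_cond hn hc h h1)
          · have : egf^[i] n = 1 := by omega
            rw [this, egf_one]; exact Or.inr rfl
        · rw [h, egf_zero]; exact Or.inr rfl
    rintro m ⟨hm, i, hi⟩
    rcases key i with h | h
    · exact Finset.mem_coe.mpr (Nat.mem_divisors.mpr ⟨hi ▸ h, hn0⟩)
    · omega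
  · -- divisors ⊆ Fset
    have key : ∀ k : ℕ, ∀ d : ℕ, d ∣ n → n - d ≤ k → ∃ i, egf^[i] n = d := by
      intro k
      induction k with
      | zero =>
        intro d hd hk
        have h1 : d ≤ n := Nat.le_of_dvd (by omega) hd
        have : d = n := by omega
        exact ⟨0, this.symm⟩
      | succ k ih =>
        intro d hd hk
        rcases eq_or_lt_of_le (Nat.le_of_dvd (by omega) hd) with heq | hlt
        · exact ⟨0, heq.symm⟩
        · have hd0 : 0 < d := Nat.pos_of_dvd_of_pos hd (by omega)
          set T := n.divisors.filter (fun x => d < x) with hT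
          have hnT : n ∈ T := Finset.mem_filter.mpr ⟨Nat.mem_divisors.mpr ⟨dvd_rfl, hn0⟩, hlt⟩
          have hTne : T.Nonempty := ⟨n, hnT⟩
          set dp := T.min' hTne with hdp
          have hdpT : dp ∈ T := T.min'_mem hTne
          obtain ⟨hdpd, hdlt⟩ := Finset.mem_filter.mp hdpT
          have hdpdvd : dp ∣ n := (Nat.mem_divisors.mp hdpd).1
          have hdp1 : 1 < dp := by omega
          obtain ⟨i, hi⟩ := ih dp hdpdvd (by omega)
          have e1 : egf dp ∣ n := egf_dvd_of_cond hn hc hdpdvd hdp1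
          have e2 : egf dp < dp := egf_lt hdp1
          have e3 : d ≤ egf dp := le_egf_of_cond hn hc hdpdvd hdp1 hd hdlt
          have e4 : egf dp ≤ d := by
            by_contra hgt
            push_neg at hgt
            have : egf dp ∈ T := Finset.mem_filter.mpr
              ⟨Nat.mem_divisors.mpr ⟨e1, hn0⟩, hgt⟩
            have := T.min'_le _ this
            omega
          have : egf dp = d := by omega
          exact ⟨i + 1, by rw [Function.iterate_succ_apply', hi, this]⟩
    intro d hdmem
    have hd := Nat.mem_divisors.mp (Finset.mem_coe.mp hdmem)
    exact ⟨Nat.pos_of_dvd_of_pos hd.1 (by omega), key (n - d) d hd.1 le_rfl⟩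

include hn in
lemma cond_of_Fset_eq (hF : Fset n = (n.divisors : Set ℕ)) :
    ∀ p ∈ n.primeFactors, p - 1 = Mf n p := by
  have hn0 : n ≠ 0 := by omega
  have W : ∀ d, d ∣ n → 1 < d → egf d ∣ n ∧ ∀ e, e ∣ n → e < d → e ≤ egf d := by
    intro d hd hd1
    have hdF : d ∈ Fset n := by
      rw [hF]; exact Finset.mem_coe.mpr (Nat.mem_divisors.mpr ⟨hd, hn0⟩)
    obtain ⟨hdpos, i, hi⟩ := hdF
    have hiter : egf^[i+1] n = egf d := by rw [Function.iterate_succ_apply', hi]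
    have hegfF : egf d ∈ Fset n := ⟨egf_pos hd1, i+1, hiter⟩
    rw [hF] at hegfF
    have hegfdvd : egf d ∣ n := (Nat.mem_divisors.mp (Finset.mem_coe.mp hegfF)).1
    refine ⟨hegfdvd, ?_⟩
    intro e he hed
    have heF : e ∈ Fset n := by
      rw [hF]; exact Finset.mem_coe.mpr (Nat.mem_divisors.mpr ⟨he, hn0⟩)
    obtain ⟨hepos, j, hj⟩ := heF
    have hij : ¬ j ≤ i := by
      intro h
      have := iter_egf_anti n h
      rw [hi, hj] at this
      omega
    have h2 : i + 1 ≤ j := by omega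
    have := iter_egf_anti n h2
    rwa [hj, hiter] at this
  intro p hp
  obtain ⟨hpp, hpd, -⟩ := Nat.mem_primeFactors.mp hp
  have hp1 : 1 < p := hpp.one_lt
  have hegfp : egf p = p - 1 := by unfold egf; rw [if_pos hpp]
  obtain ⟨hW1, hW2⟩ := W p hpd hp1
  rw [hegfp] at hW1 hW2
  have hs1 : p - 1 ∣ Mf n p := by
    apply dvd_Mf hn0 hW1
    intro q hq hq2
    have : q ≤ p - 1 := Nat.le_of_dvd (by omega) hq2
    omega
  have hle1 : p - 1 ≤ Mf n p := Nat.le_of_dvd (Mf_pos n p) hs1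
  have hle2 : Mf n p ≤ p - 1 := by
    by_contra hgt
    push_neg at hgt
    set U := (Mf n p).divisors.filter (fun x => p - 1 < x) with hU
    have hMfmem : Mf n p ∈ U := Finset.mem_filter.mpr
      ⟨Nat.mem_divisors.mpr ⟨dvd_rfl, (Mf_pos n p).ne'⟩, hgt⟩
    have hUne : U.Nonempty := ⟨_, hMfmem⟩
    set e := U.min' hUne with he
    have heU : e ∈ U := U.min'_mem hUne
    obtain ⟨heMf, hegt⟩ := Finset.mem_filter.mp heU
    have heMfdvd : e ∣ Mf n p := (Nat.mem_divisors.mp heMf).1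
    have hedvd : e ∣ n := heMfdvd.trans (Mf_dvd n p hn0)
    have hep : e ≠ p := by
      intro h
      rw [h] at heMfdvd
      exact absurd (prime_dvd_Mf_lt hpp heMfdvd) (lt_irrefl _)
    have hpe : p < e := by
      rcases Nat.lt_or_ge p e with h | h
      · exact h
      · omega
    have he1 : 1 < e := by omega
    obtain ⟨hWe1, hWe2⟩ := W e hedvd he1
    have hple : p ≤ egf e := hWe2 p hpd hpe
    have hegfMf : egf e ∣ Mf n p := by
      apply dvd_Mf hn0 hWe1
      intro s hs hsdvd
      rw [egf_eq_mul he1] at hsdvd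
      have hq'p : e.minFac.Prime := Nat.minFac_prime (by omega)
      have hq'lt : e.minFac < p := prime_dvd_Mf_lt hq'p ((Nat.minFac_dvd e).trans heMfdvd)
      rcases (Nat.Prime.dvd_mul hs).mp hsdvd with h | h
      · exact prime_dvd_Mf_lt hs ((h.trans (Nat.div_dvd_of_dvd (Nat.minFac_dvd e))).trans heMfdvd)
      · have hq'2 : 2 ≤ e.minFac := hq'p.two_le
        have : s ≤ e.minFac - 1 := Nat.le_of_dvd (by omega) h
        omega
    have hegfU : egf e ∈ U := Finset.mem_filter.mpr
      ⟨Nat.mem_divisors.mpr ⟨hegfMf, (Mf_pos n p).ne'⟩, by omega⟩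
    have := U.min'_le _ hegfU
    have := egf_lt he1
    omega
  omega

end Cond

/-- for `n > 1` with prime factorization `∏ pᵢ^{aᵢ}` (distinct primes
`p₁ < ⋯ < p_ℓ`), we have `F n = D n` iff for every prime divisor `pᵢ` of `n`,
`pᵢ - 1 = ∏_{j<i} pⱼ^{aⱼ}` (the product of the full prime powers at the smaller primes). -/
theorem stmt1 (n : ℕ) (hn : 1 < n) :
    Fset n = (n.divisors : Set ℕ) ↔
      ∀ p ∈ n.primeFactors,
        p - 1 = ∏ q ∈ n.primeFactors.filter (· < p), q ^ n.factorization q := by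
  constructor
  · exact cond_of_Fset_eq hn
  · exact Fset_eq_divisors_of_cond hn
end

section
/- Let n > 1 be a positive integer with prime factorization n = ∏_{i=1}^ℓ p_i^{a_i}, where p_1 < p_2 < ⋯ < p_ℓ and a_ℓ = 1. If p_i − 1 = ∏_{j=1}^{i−1} p_j^{a_j} for every 1 ≤ i < ℓ, and p_ℓ + 1 = n/p_ℓ, then ∑_{p^k ∣ n} 1/p^k − 1/n = 1, where the sum ranges over all prime power divisors p^k of n; in particular n is a prime power Giuga number. -/
/-! Write `D(p) = ∏_{r < p} r ^ {a_r}` (`smoothPart n p`), so that `D(p + 1) = D(p) p ^ {a_p}`.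
The hypothesis `p - 1 = D(p)` turns the geometric sum `∑_{k=1}^{a_p} p⁻ᵏ = (1 - p^{-a_p})/(p - 1)`
into `1/D(p) - 1/D(p + 1)`, and these differences telescope over all primes to `1 - 1/n`.
Only the largest prime `q` breaks the pattern: its contribution is `1/q` instead of
`1/D(q) - 1/D(q + 1) = 1/(q + 1) - 1/n`, and as `n = q(q + 1)` the defect is `2/n`. -/

open Finset

lemma sum_Icc_one_inv_pow {K : Type*} [Field K] {x : K} (hx : x ≠ 0) (hx1 : x ≠ 1) (a : ℕ) :
    ∑ k ∈ Icc 1 a, (x ^ k)⁻¹ = (x - 1)⁻¹ - ((x - 1) * x ^ a)⁻¹ := by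
  have hx1' : x - 1 ≠ 0 := sub_ne_zero.mpr hx1
  induction a with
  | zero => simp
  | succ a ih =>
    rw [sum_Icc_succ_top (by omega), ih]
    field_simp
    ring

lemma ppSum_eq_sum_primeFactors {n : ℕ} (hn : n ≠ 0) :
    ppSum n = ∑ p ∈ n.primeFactors, ∑ k ∈ Icc 1 (n.factorization p), ((p : ℚ) ^ k)⁻¹ := by
  rw [ppSum, sum_sigma']
  symm
  refine sum_bij (fun x _ => x.1 ^ x.2) ?_ ?_ ?_ ?_
  · rintro ⟨p, k⟩ hpk
    obtain ⟨hp, hk1, hk⟩ : p ∈ n.primeFactors ∧ 1 ≤ k ∧ k ≤ n.factorization p := by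
      simpa using hpk
    have hp' := Nat.prime_of_mem_primeFactors hp
    exact mem_filter.mpr ⟨Nat.mem_divisors.mpr ⟨(hp'.pow_dvd_iff_le_factorization hn).mpr hk, hn⟩,
      ⟨p, k, hp'.prime, hk1, rfl⟩⟩
  · rintro ⟨p, k⟩ hpk ⟨p', k'⟩ hpk' h
    simp only [mem_sigma, mem_Icc] at hpk hpk' h
    obtain ⟨rfl, rfl⟩ := Nat.Prime.pow_inj' (Nat.prime_of_mem_primeFactors hpk.1)
      (Nat.prime_of_mem_primeFactors hpk'.1) (by omega) (by omega) h
    rfl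
  · intro d hd
    obtain ⟨⟨hdn, -⟩, p, k, hp, hk, rfl⟩ := by simpa only [mem_filter, Nat.mem_divisors] using hd
    have hp' := hp.nat_prime
    exact ⟨⟨p, k⟩, mem_sigma.mpr ⟨hp'.mem_primeFactors (dvd_trans (dvd_pow_self p hk.ne') hdn) hn,
      mem_Icc.mpr ⟨hk, (hp'.pow_dvd_iff_le_factorization hn).mp hdn⟩⟩, rfl⟩
  · intro x _
    simp

def smoothPart (n p : ℕ) : ℕ := ∏ r ∈ n.primeFactors.filter (· < p), r ^ n.factorization r

lemma smoothPart_zero (n : ℕ) : smoothPart n 0 = 1 := by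
  simp [smoothPart]

lemma smoothPart_succ (n p : ℕ) :
    smoothPart n (p + 1) = smoothPart n p * p ^ n.factorization p := by
  by_cases hp : p ∈ n.primeFactors
  · have : n.primeFactors.filter (· < p + 1) = insert p (n.primeFactors.filter (· < p)) := by
      ext r; simp only [mem_filter, mem_insert, Nat.lt_succ_iff_lt_or_eq]
      constructor
      · rintro ⟨hr, hrp | rfl⟩ <;> tauto
      · rintro (rfl | ⟨hr, hrp⟩) <;> tauto
    rw [smoothPart, smoothPart, this, prod_insert (by simp), mul_comm]
  · have : n.primeFactors.filter (· < p + 1) = n.primeFactors.filter (· < p) := by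
      ext r; simp only [mem_filter, Nat.lt_succ_iff_lt_or_eq]
      constructor
      · rintro ⟨hr, hrp | rfl⟩ <;> tauto
      · tauto
    rw [smoothPart, smoothPart, this, Finsupp.notMem_support_iff.mp hp, pow_zero, mul_one]

lemma smoothPart_eq_self {n p : ℕ} (hn : n ≠ 0) (hp : ∀ r ∈ n.primeFactors, r < p) :
    smoothPart n p = n := by
  rw [smoothPart, filter_true_of_mem hp]
  exact Nat.prod_factorization_pow_eq_self hn

lemma sum_primeFactors_inv_smoothPart_sub {K : Type*} [DivisionRing K] {n : ℕ} (hn : n ≠ 0) :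
    ∑ p ∈ n.primeFactors, ((smoothPart n p : K)⁻¹ - (smoothPart n (p + 1) : K)⁻¹) =
      1 - (n : K)⁻¹ := by
  have hsub : n.primeFactors ⊆ range (n + 1) := fun p hp =>
    mem_range.mpr (Nat.lt_succ_of_le (Nat.le_of_mem_primeFactors hp))
  rw [sum_subset hsub, sum_range_sub' (fun p => (smoothPart n p : K)⁻¹), smoothPart_zero,
    smoothPart_eq_self hn fun r hr => mem_range.mp (hsub hr)]
  · simp
  · intro p _ hp
    rw [smoothPart_succ, Finsupp.notMem_support_iff.mp hp, pow_zero, mul_one, sub_self]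

lemma sum_Icc_one_inv_pow_eq_inv_smoothPart_sub {n p : ℕ} (hp : p.Prime)
    (h : p - 1 = smoothPart n p) :
    ∑ k ∈ Icc 1 (n.factorization p), ((p : ℚ) ^ k)⁻¹ =
      (smoothPart n p : ℚ)⁻¹ - (smoothPart n (p + 1) : ℚ)⁻¹ := by
  have hcast : (smoothPart n p : ℚ) = p - 1 := by rw [← h, Nat.cast_sub hp.one_le, Nat.cast_one]
  rw [sum_Icc_one_inv_pow (by exact_mod_cast hp.ne_zero) (by exact_mod_cast hp.ne_one),
    smoothPart_succ, Nat.cast_mul, Nat.cast_pow, hcast]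

/-- if `n > 1` has prime factorization `∏ pᵢ^{aᵢ}` with `p₁ < ⋯ < p_ℓ`,
`a_ℓ = 1`, `pᵢ - 1 = ∏_{j<i} pⱼ^{aⱼ}` for all `i < ℓ`, and `p_ℓ + 1 = n / p_ℓ`,
then `∑_{p^k ∣ n} 1/p^k - 1/n = 1`; in particular `n` is a prime power Giuga number.
Here `q` denotes the largest prime divisor `p_ℓ` of `n`. -/
theorem stmt3 (n q : ℕ) (hn : 1 < n)
    (hq : q ∈ n.primeFactors) (hqmax : ∀ p ∈ n.primeFactors, p ≤ q)
    (haℓ : n.factorization q = 1)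
    (hcond : ∀ p ∈ n.primeFactors, p ≠ q →
      p - 1 = ∏ r ∈ n.primeFactors.filter (· < p), r ^ n.factorization r)
    (hq1 : q + 1 = n / q) :
    ppSum n - 1 / (n : ℚ) = 1 ∧ PPGiuga n := by
  have hn0 : n ≠ 0 := by omega
  have hq2 := (Nat.prime_of_mem_primeFactors hq).two_le
  have hnq : n = q * (q + 1) := by rw [hq1, Nat.mul_div_cancel' (Nat.dvd_of_mem_primeFactors hq)]
  have htop : smoothPart n (q + 1) = n :=
    smoothPart_eq_self hn0 fun p hp => Nat.lt_succ_of_le (hqmax p hp)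
  have hbelow : smoothPart n q = q + 1 := by
    have h := smoothPart_succ n q
    rw [htop, haℓ, pow_one] at h
    exact Nat.eq_of_mul_eq_mul_right (by omega) (h.symm.trans (hnq.trans (mul_comm _ _)))
  have hsum : ppSum n = 1 - (n : ℚ)⁻¹ + ((q : ℚ)⁻¹ - ((q : ℚ) + 1)⁻¹ + (n : ℚ)⁻¹) := by
    rw [ppSum_eq_sum_primeFactors hn0, ← sum_primeFactors_inv_smoothPart_sub hn0,
      ← sub_eq_iff_eq_add', ← sum_sub_distrib, sum_eq_single_of_mem q hq]
    · rw [haℓ, htop, hbelow, Icc_self, sum_singleton, pow_one]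
      push_cast
      ring
    · intro p hp hpq
      rw [sum_Icc_one_inv_pow_eq_inv_smoothPart_sub (Nat.prime_of_mem_primeFactors hp)
        (hcond p hp hpq), sub_self]
  have hmain : ppSum n - 1 / (n : ℚ) = 1 := by
    rw [hsum, hnq]
    push_cast
    field_simp
    ring
  refine ⟨hmain, hn, ?_, 1, one_pos, by rw [hmain]; norm_num⟩
  rw [hnq]
  exact Nat.not_prime_mul (by omega) (by omega)
end

section
/- Let n > 1 be a positive integer with F_n = D_n, and let p be the largest prime divisor of n. If n/p > 1, then F_{n/p} = D_{n/p}. -/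
lemma egf_lt_s5 {m : ℕ} (h : 0 < egf m) : egf m < m := by
  by_cases hp : m.Prime
  · rw [egf, if_pos hp] at h ⊢; omega
  · rw [egf, if_neg hp] at h ⊢
    have hlt : m / m.minFac < m := tsub_pos_iff_lt.mp h
    have h1 : 0 < m := lt_of_le_of_lt (Nat.zero_le _) hlt
    have h2 : 0 < m / m.minFac := Nat.div_pos (Nat.minFac_le h1) (Nat.minFac_pos m)
    exact Nat.sub_lt h1 h2

lemma egf_pos_s5 {m : ℕ} (h : 1 < m) : 0 < egf m := by
  by_cases hp : m.Prime
  · rw [egf, if_pos hp]; omega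
  · rw [egf, if_neg hp]
    have h2 : m / m.minFac < m :=
      Nat.div_lt_self (by omega) (Nat.minFac_prime (by omega)).one_lt
    exact tsub_pos_iff_lt.mpr h2

lemma iter_lt (n : ℕ) : ∀ j i, i < j → 0 < egf^[j] n → egf^[j] n < egf^[i] n := by
  intro j
  induction j with
  | zero => omega
  | succ j ih =>
    intro i hij hpos
    have hs : egf^[j+1] n = egf (egf^[j] n) := Function.iterate_succ_apply' egf j n
    rw [hs] at hpos ⊢
    have hlt : egf (egf^[j] n) < egf^[j] n := egf_lt_s5 hpos
    rcases Nat.lt_or_ge i j with h2 | h2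
    · exact lt_trans hlt (ih i h2 (by omega))
    · have : i = j := by omega
      subst this; exact hlt

/-- if `n > 1` satisfies `F n = D n`, `p` is the largest prime divisor
of `n`, and `n / p > 1`, then `F (n/p) = D (n/p)`. -/
theorem stmt5 (n p : ℕ) (hn : 1 < n) (h : Fset n = (n.divisors : Set ℕ))
    (hp : p ∈ n.primeFactors) (hpmax : ∀ q ∈ n.primeFactors, q ≤ p)
    (hnp : 1 < n / p) :
    Fset (n / p) = ((n / p).divisors : Set ℕ) := by
  have hpp : p.Prime := (Nat.mem_primeFactors.mp hp).1
  have hpn : p ∣ n := (Nat.mem_primeFactors.mp hp).2.1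
  have hn0 : n ≠ 0 := by omega
  set m := n / p with hm
  have hmp : m * p = n := Nat.div_mul_cancel hpn
  have hmn : m ∣ n := ⟨p, hmp.symm⟩
  have hm1 : 1 < m := hnp
  have hFn : ∀ x : ℕ, (0 < x ∧ ∃ i, egf^[i] n = x) ↔ x ∣ n := by
    intro x
    have := Set.ext_iff.mp h x
    simp only [Fset, Set.mem_setOf_eq, Finset.mem_coe, Nat.mem_divisors] at this
    exact this.trans (and_iff_left hn0)
  -- key step : the egf-image of a nontrivial divisor of m divides m
  have key : ∀ d, d ∣ m → 1 < d → egf d ∣ m := by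
    intro d hdm hd1
    have hdn : d ∣ n := hdm.trans hmn
    obtain ⟨hdpos, i, hi⟩ := (hFn d).mpr hdn
    have hedn : egf d ∣ n :=
      (hFn (egf d)).mp ⟨egf_pos_s5 hd1, i + 1, by
        rw [Function.iterate_succ_apply', hi]⟩
    have hpe : p * egf d ∣ n := by
      by_cases hdp : d.Prime
      · have hdle : d ≤ p := hpmax d (Nat.mem_primeFactors.mpr ⟨hdp, hdn, hn0⟩)
        have hnd : ¬ p ∣ (d - 1) := by
          intro hc
          have := Nat.le_of_dvd (by omega) hc
          omega
        have hcop : Nat.Coprime p (d - 1) := (Nat.Prime.coprime_iff_not_dvd hpp).mpr hnd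
        have he : egf d = d - 1 := by rw [egf, if_pos hdp]
        rw [he]
        exact Nat.Coprime.mul_dvd_of_dvd_of_dvd hcop hpn (he ▸ hedn)
      · set q := d.minFac with hq
        have hqp : q.Prime := Nat.minFac_prime (by omega)
        have hqd : q ∣ d := Nat.minFac_dvd d
        have hq2 : 2 ≤ q := hqp.two_le
        have hqle : q ≤ p := hpmax q (Nat.mem_primeFactors.mpr ⟨hqp, hqd.trans hdn, hn0⟩)
        have hx : q * (d / q) = d := Nat.mul_div_cancel' hqd
        have hdqd : d / q ∣ d := Nat.div_dvd_of_dvd hqd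
        have hdq1 : 1 ≤ d / q := Nat.one_le_div_iff (by omega) |>.mpr (Nat.le_of_dvd (by omega) hqd |>.trans (le_refl d)) 
        have he : egf d = (q - 1) * (d / q) := by
          have e1 : (q - 1) * (d / q) = q * (d / q) - (d / q) := Nat.sub_one_mul q (d / q)
          rw [egf, if_neg hdp, ← hq, e1, hx]
        have hpd : p * (d / q) ∣ n := by
          have h1 : (d / q) * p ∣ m * p := mul_dvd_mul (hdqd.trans hdm) dvd_rfl
          rw [hmp] at h1
          rwa [mul_comm]
        have hnq : ¬ p ∣ (q - 1) := by
          intro hc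
          have := Nat.le_of_dvd (by omega) hc
          omega
        have hcop : Nat.Coprime p (q - 1) := (Nat.Prime.coprime_iff_not_dvd hpp).mpr hnq
        have hlcm : Nat.lcm (p * (d / q)) ((q - 1) * (d / q)) ∣ n :=
          Nat.lcm_dvd hpd (he ▸ hedn)
        rw [Nat.lcm_mul_right, hcop.lcm_eq_mul] at hlcm
        rw [he, ← mul_assoc]
        exact hlcm
    have : egf d * p ∣ m * p := by rw [hmp, mul_comm]; exact hpe
    exact (Nat.mul_dvd_mul_iff_right hpp.pos).mp this
  -- conclusion
  ext e
  simp only [Fset, Set.mem_setOf_eq, Finset.mem_coe, Nat.mem_divisors]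
  constructor
  · rintro ⟨hepos, i, hi⟩
    refine ⟨?_, by omega⟩
    subst hi
    induction i with
    | zero => exact dvd_rfl
    | succ i ih =>
      rw [Function.iterate_succ_apply'] at hepos ⊢
      have hX : egf (egf^[i] m) < egf^[i] m := egf_lt_s5 hepos
      have hX1 : 1 < egf^[i] m := by omega
      exact key _ (ih (by omega)) hX1
  · rintro ⟨hem, -⟩
    have hepos : 0 < e := Nat.pos_of_dvd_of_pos hem (by omega)
    obtain ⟨-, j, hj⟩ := (hFn e).mpr (hem.trans hmn)
    obtain ⟨-, i, hi⟩ := (hFn m).mpr hmn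
    have hle : e ≤ m := Nat.le_of_dvd (by omega) hem
    have hij : i ≤ j := by
      by_contra hc
      have := iter_lt n i j (by omega) (by rw [hi]; omega)
      omega
    refine ⟨hepos, j - i, ?_⟩
    rw [hi.symm, ← Function.iterate_add_apply]
    rw [show j - i + i = j from by omega, hj]
end

section
/- If n is a prime power pseudoperfect number and n + 1 is prime, then n(n+1)^k is a prime power pseudoperfect number for every nonnegative integer k. -/
lemma filter_step (p : ℕ) (hp : p.Prime) (n k : ℕ) (hn : 0 < n) (hpn : ¬ p ∣ n) :
    ((n * p ^ (k+1)).divisors.filter (fun d => IsPrimePow d)) =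
      insert (p ^ (k+1)) ((n * p ^ k).divisors.filter (fun d => IsPrimePow d)) := by
  have hn0 : n * p ^ k ≠ 0 := by
    have := hp.pos; positivity
  have hn1 : n * p ^ (k+1) ≠ 0 := by
    have := hp.pos; positivity
  have hcopn : Nat.Coprime p n := (Nat.Prime.coprime_iff_not_dvd hp).mpr hpn
  ext d
  simp only [Finset.mem_insert, Finset.mem_filter, Nat.mem_divisors]
  constructor
  · rintro ⟨⟨hdvd, -⟩, hpp⟩
    obtain ⟨q, j, hq, hj, rfl⟩ := hpp
    rw [← Nat.prime_iff] at hq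
    by_cases hqp : q = p
    · subst hqp
      have hcop : Nat.Coprime (q ^ j) n := Nat.Coprime.pow_left j hcopn
      have hqd : q ^ j ∣ q ^ (k+1) := (Nat.Coprime.dvd_of_dvd_mul_left hcop hdvd)
      have hjle : j ≤ k + 1 := (Nat.pow_dvd_pow_iff_le_right hq.one_lt).mp hqd
      rcases eq_or_lt_of_le hjle with heq | hlt
      · exact Or.inl (by rw [heq])
      · refine Or.inr ⟨⟨dvd_mul_of_dvd_right (pow_dvd_pow q (by omega)) n, hn0⟩,
          ⟨q, j, Nat.prime_iff.mp hq, hj, rfl⟩⟩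
    · have hcop : Nat.Coprime (q ^ j) (p ^ (k+1)) :=
        Nat.Coprime.pow _ _ ((Nat.coprime_primes hq hp).mpr hqp)
      have : q ^ j ∣ n := Nat.Coprime.dvd_of_dvd_mul_right hcop hdvd
      exact Or.inr ⟨⟨dvd_mul_of_dvd_left this _, hn0⟩,
        ⟨q, j, Nat.prime_iff.mp hq, hj, rfl⟩⟩
  · rintro (rfl | ⟨⟨hdvd, -⟩, hpp⟩)
    · exact ⟨⟨dvd_mul_left _ n, hn1⟩, ⟨p, k+1, Nat.prime_iff.mp hp, Nat.succ_pos _, rfl⟩⟩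
    · refine ⟨⟨hdvd.trans (mul_dvd_mul_left n (pow_dvd_pow p (by omega))), hn1⟩, hpp⟩

lemma pow_succ_not_dvd (p : ℕ) (hp : p.Prime) (n k : ℕ) (hpn : ¬ p ∣ n) :
    ¬ p ^ (k+1) ∣ n * p ^ k := by
  intro hdvd
  rw [pow_succ, mul_comm (p ^ k) p] at hdvd
  exact hpn ((Nat.mul_dvd_mul_iff_right (pow_pos hp.pos k)).mp hdvd)

lemma ppSum_step (p : ℕ) (hp : p.Prime) (n k : ℕ) (hn : 0 < n) (hpn : ¬ p ∣ n) :
    ppSum (n * p ^ (k+1)) = ppSum (n * p ^ k) + 1 / (p ^ (k+1) : ℚ) := by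
  unfold ppSum
  rw [filter_step p hp n k hn hpn, Finset.sum_insert]
  · push_cast; ring
  · simp only [Finset.mem_filter, Nat.mem_divisors]
    rintro ⟨⟨hdvd, -⟩, -⟩
    exact pow_succ_not_dvd p hp n k hpn hdvd

/-- if `n` is a prime power pseudoperfect number and `n + 1` is prime,
then `n*(n+1)^k` is a prime power pseudoperfect number for every `k ≥ 0`. -/
theorem stmt7 (n : ℕ) (h : PPPseudoperfect n) (hp : (n + 1).Prime) (k : ℕ) :
    PPPseudoperfect (n * (n + 1) ^ k) := by
  obtain ⟨hn1, hsum⟩ := h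
  have hn : 0 < n := by omega
  have hpn : ¬ (n + 1) ∣ n := fun hd => by
    have := Nat.le_of_dvd hn hd; omega
  induction k with
  | zero => exact ⟨by simpa using hn1, by simpa using hsum⟩
  | succ k ih =>
    obtain ⟨ih1, ih2⟩ := ih
    constructor
    · have : 0 < (n+1)^(k+1) := by positivity
      calc 1 < n := hn1
        _ ≤ n * (n+1)^(k+1) := Nat.le_mul_of_pos_right n this
    · rw [ppSum_step (n+1) hp n k hn hpn]
      have hnQ : (n : ℚ) ≠ 0 := Nat.cast_ne_zero.mpr hn.ne'
      have harith : (1 : ℚ) / (((n+1 : ℕ)) ^ (k+1) : ℚ) + 1 / ((n * (n+1)^(k+1) : ℕ) : ℚ)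
          = 1 / ((n * (n+1)^k : ℕ) : ℚ) := by
        push_cast
        have hp1 : ((n : ℚ) + 1) ≠ 0 := by positivity
        field_simp
        ring
      linarith [ih2, harith]
end

section
/- If n is a prime power pseudoperfect number and n − 1 is prime, then n(n−1) satisfies ∑_{p^k ∣ n(n−1)} 1/p^k − 1/(n(n−1)) = 1, where the sum ranges over all prime power divisors p^k of n(n−1); in particular n(n−1) is a prime power Giuga number. -/
lemma ppSum_mul_coprime (a b : ℕ) (ha : a ≠ 0) (hb : b ≠ 0) (hab : a.Coprime b) :
    ppSum (a * b) = ppSum a + ppSum b := by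
  unfold ppSum
  rw [← Finset.sum_union]
  · congr 1
    ext d
    simp only [Finset.mem_union, Finset.mem_filter, Nat.mem_divisors, mul_ne_zero ha hb, ha, hb,
      and_true, ne_eq, not_false_eq_true]
    constructor
    · rintro ⟨hd, hpp⟩
      rcases (hab.isPrimePow_dvd_mul hpp).1 hd with h | h
      · exact Or.inl ⟨h, hpp⟩
      · exact Or.inr ⟨h, hpp⟩
    · rintro (⟨hd, hpp⟩ | ⟨hd, hpp⟩)
      · exact ⟨hd.mul_right b, hpp⟩
      · exact ⟨hd.mul_left a, hpp⟩
  · rw [Finset.disjoint_left]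
    rintro d hda hdb
    simp only [Finset.mem_filter, Nat.mem_divisors] at hda hdb
    have h1 : d ∣ Nat.gcd a b := Nat.dvd_gcd hda.1.1 hdb.1.1
    rw [hab] at h1
    exact hda.2.one_lt.ne' (Nat.eq_one_of_dvd_one h1)

lemma ppSum_prime (q : ℕ) (hq : q.Prime) : ppSum q = 1 / q := by
  unfold ppSum
  rw [hq.divisors, Finset.filter_insert, Finset.filter_singleton]
  simp [hq.isPrimePow, not_isPrimePow_one]

/-- if `n` is a prime power pseudoperfect number and `n - 1` is prime,
then `∑_{p^k ∣ n(n-1)} 1/p^k - 1/(n(n-1)) = 1`; in particular `n(n-1)` is a prime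
power Giuga number. -/
theorem stmt8 (n : ℕ) (h : PPPseudoperfect n) (hp : (n - 1).Prime) :
    ppSum (n * (n - 1)) - 1 / ((n * (n - 1) : ℕ) : ℚ) = 1 ∧ PPGiuga (n * (n - 1)) := by
  obtain ⟨hn1, hsum⟩ := h
  have hn3 : 3 ≤ n := by have := hp.two_le; omega
  have hcop : n.Coprime (n - 1) := by
    have : (n - 1) + 1 = n := by omega
    rw [← this]; simp [Nat.Coprime]
  have key : ppSum (n * (n - 1)) = ppSum n + 1 / (n - 1 : ℕ) := by
    rw [ppSum_mul_coprime n (n - 1) (by omega) (by omega) hcop, ppSum_prime _ hp]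
  have hc : ((n - 1 : ℕ) : ℚ) = (n : ℚ) - 1 := by
    push_cast [Nat.cast_sub (by omega : 1 ≤ n)]; ring
  have hppn : ppSum n = 1 - 1 / n := by linarith
  have hne : (n : ℚ) ≠ 0 := by positivity
  have hne1 : (n : ℚ) - 1 ≠ 0 := by
    have : (3:ℚ) ≤ n := by exact_mod_cast hn3
    linarith
  have main : ppSum (n * (n - 1)) - 1 / ((n * (n - 1) : ℕ) : ℚ) = 1 := by
    rw [key, hppn, Nat.cast_mul, hc]
    field_simp
    ring
  refine ⟨main, ?_, Nat.not_prime_mul (by omega) (by omega), 1, one_pos, ?_⟩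
  · have : 2 * 2 ≤ n * (n - 1) := Nat.mul_le_mul (by omega) (by omega)
    omega
  · rw [Nat.cast_one]; exact main
end

section
/- Every primary pseudoperfect number is squarefree. -/
/-!
Multiplying `∑_{q ∣ n} 1/q + 1/n = 1` by `n` gives `∑_{q ∣ n} n/q + 1 = n`. If `p² ∣ n`, then `p`
divides every term `n/q` (for `q = p` because `p² ∣ n`, otherwise because `p ∣ n/q`), hence
`p ∣ 1`.
-/

theorem PrimaryPseudoperfect.sum_div_primeFactors_add_one {n : ℕ} (h : PrimaryPseudoperfect n) :
    ∑ q ∈ n.primeFactors, n / q + 1 = n := by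
  obtain ⟨hn, heq⟩ := h
  have hn0 : (n : ℚ) ≠ 0 := by exact_mod_cast (zero_lt_one.trans hn).ne'
  have hterm : ∀ q ∈ n.primeFactors, ((n / q : ℕ) : ℚ) = n * (1 / q) := fun q hq => by
    rw [Nat.cast_div (Nat.dvd_of_mem_primeFactors hq)
      (Nat.cast_ne_zero.mpr (Nat.prime_of_mem_primeFactors hq).ne_zero)]
    ring
  suffices ((∑ q ∈ n.primeFactors, n / q : ℕ) : ℚ) + 1 = n by exact_mod_cast this
  rw [Nat.cast_sum, Finset.sum_congr rfl hterm, ← Finset.mul_sum]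
  field_simp at heq
  linarith

theorem Nat.dvd_sum_div_primeFactors_of_mul_self_dvd {n p : ℕ} (hp : p.Prime) (hpp : p * p ∣ n) :
    p ∣ ∑ q ∈ n.primeFactors, n / q := by
  have hpn : p ∣ n := dvd_of_mul_right_dvd hpp
  refine Finset.dvd_sum fun q hq => ?_
  have hqn := Nat.dvd_of_mem_primeFactors hq
  rw [Nat.dvd_div_iff_mul_dvd hqn]
  rcases eq_or_ne q p with rfl | hne
  · exact hpp
  · exact ((Nat.coprime_primes (Nat.prime_of_mem_primeFactors hq) hp).mpr hne).mul_dvd_of_dvd_of_dvd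
      hqn hpn

/-- every primary pseudoperfect number is squarefree. -/
theorem stmt9 (n : ℕ) (h : PrimaryPseudoperfect n) : Squarefree n := by
  rw [Nat.squarefree_iff_prime_squarefree]
  intro p hp hpp
  have hpn : p ∣ ∑ q ∈ n.primeFactors, n / q + 1 := by
    rw [h.sum_div_primeFactors_add_one]
    exact dvd_of_mul_right_dvd hpp
  have hp1 : p ∣ 1 := (Nat.dvd_add_right (Nat.dvd_sum_div_primeFactors_of_mul_self_dvd hp hpp)).mp hpn
  exact hp.not_dvd_one hp1
end

section
/- Every primary pseudoperfect number is a prime power pseudoperfect number. -/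

lemma pp_nat_eq (n : ℕ) (hn : 1 < n)
    (h : (∑ p ∈ n.primeFactors, (1 : ℚ) / p) + 1 / n = 1) :
    (∑ p ∈ n.primeFactors, n / p) + 1 = n := by
  have hn0 : (n : ℚ) ≠ 0 := by positivity
  have key : (∑ p ∈ n.primeFactors, ((n / p : ℕ) : ℚ)) + 1 = (n : ℚ) := by
    have := congrArg (· * (n : ℚ)) h
    simp only [add_mul, Finset.sum_mul, one_mul, one_div] at this
    rw [inv_mul_cancel₀ hn0] at this
    rw [← this]
    congr 1
    apply Finset.sum_congr rfl
    intro p hp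
    rw [Nat.mem_primeFactors] at hp
    rw [Nat.cast_div hp.2.1 (by exact_mod_cast hp.1.ne_zero)]
    ring
  exact_mod_cast key

lemma pp_squarefree (n : ℕ) (hn : 1 < n)
    (h : (∑ p ∈ n.primeFactors, (1 : ℚ) / p) + 1 / n = 1) :
    Squarefree n := by
  rw [Nat.squarefree_iff_prime_squarefree]
  intro p hp hdvd
  have key := pp_nat_eq n hn h
  have hpn : p ∣ n := (dvd_mul_right p p).trans hdvd
  have hps : p ∣ ∑ q ∈ n.primeFactors, n / q := by
    apply Finset.dvd_sum
    intro q hq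
    rw [Nat.mem_primeFactors] at hq
    rw [Nat.dvd_div_iff_mul_dvd hq.2.1]
    rcases eq_or_ne q p with rfl | hqp
    · exact hdvd
    · exact (Nat.Coprime.mul_dvd_of_dvd_of_dvd
        ((Nat.coprime_primes hq.1 hp).mpr hqp) hq.2.1 hpn)
  have : p ∣ 1 := (Nat.dvd_add_right hps).mp (by rw [key]; exact hpn)
  exact Nat.Prime.one_lt hp |>.ne' (Nat.dvd_one.mp this)

lemma sf_filter (n : ℕ) (hn : 0 < n) (hsf : Squarefree n) :
    n.divisors.filter (fun d => IsPrimePow d) = n.primeFactors := by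
  ext d
  simp only [Finset.mem_filter, Nat.mem_divisors, Nat.mem_primeFactors]
  constructor
  · rintro ⟨⟨hd, hne⟩, hpp⟩
    obtain ⟨p, k, hp, hk, rfl⟩ := hpp
    have hsfd : Squarefree (p ^ k) := hsf.squarefree_of_dvd hd
    have hk1 : k = 1 := by
      by_contra hk1
      have h2 : 2 ≤ k := by omega
      have hppk : p * p ∣ p ^ k := by
        calc p * p = p ^ 2 := (sq p).symm
          _ ∣ p ^ k := pow_dvd_pow p h2
      exact hp.nat_prime.prime.not_unit (hsfd p hppk)
    subst hk1
    rw [pow_one] at *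
    exact ⟨hp.nat_prime, hd, hne⟩
  · rintro ⟨hp, hd, hne⟩
    exact ⟨⟨hd, hne⟩, hp.prime.isPrimePow⟩

/-- every primary pseudoperfect number is a prime power pseudoperfect number. -/
theorem stmt10 (n : ℕ) (h : PrimaryPseudoperfect n) : PPPseudoperfect n := by
  obtain ⟨hn, heq⟩ := h
  refine ⟨hn, ?_⟩
  unfold ppSum
  rw [sf_filter n (by omega) (pp_squarefree n hn heq)]
  exact heq
end

section
/- Every Giuga number is squarefree. -/
/-- every Giuga number is squarefree. -/
theorem stmt11 (n : ℕ) (h : Giuga n) : Squarefree n := by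
  obtain ⟨hn, hnp, m, hm, heq⟩ := h
  have hn0 : 0 < n := by omega
  rw [Nat.squarefree_iff_prime_squarefree]
  intro p hp hpp
  have hpn : p ∣ n := (dvd_mul_right p p).trans hpp
  -- S = ∑ n/q over prime factors
  set S : ℕ := ∑ q ∈ n.primeFactors, n / q with hS
  have hScast : (S : ℚ) = (∑ q ∈ n.primeFactors, (1 : ℚ) / q) * n := by
    rw [hS, Nat.cast_sum, Finset.sum_mul]
    apply Finset.sum_congr rfl
    intro q hq
    have hq1 : q ∣ n := Nat.dvd_of_mem_primeFactors hq
    have hq0 : (q : ℚ) ≠ 0 := by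
      exact_mod_cast (Nat.prime_of_mem_primeFactors hq).ne_zero
    rw [Nat.cast_div hq1 hq0]
    field_simp
  have hSmn : S = m * n + 1 := by
    have hne : (n : ℚ) ≠ 0 := by positivity
    have : (S : ℚ) = (m * n + 1 : ℕ) := by
      rw [hScast]
      have : (∑ q ∈ n.primeFactors, (1 : ℚ) / q) = m + 1 / n := by
        linarith [heq]
      rw [this]
      push_cast
      field_simp
    exact_mod_cast this
  have hpS : p ∣ S := by
    apply Finset.dvd_sum
    intro q hq
    have hqp : q.Prime := Nat.prime_of_mem_primeFactors hq
    have hqn : q ∣ n := Nat.dvd_of_mem_primeFactors hq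
    rcases eq_or_ne q p with rfl | hne
    · exact (Nat.dvd_div_iff_mul_dvd hqn).mpr hpp
    · refine (Nat.dvd_div_iff_mul_dvd hqn).mpr ?_
      exact (Nat.Coprime.mul_dvd_of_dvd_of_dvd
        ((Nat.coprime_primes hqp hp).mpr hne) hqn hpn)
  rw [hSmn] at hpS
  have : p ∣ 1 := (Nat.dvd_add_right (Dvd.dvd.mul_left hpn m)).mp hpS
  exact hp.one_lt.ne' (Nat.dvd_one.mp this)
end

section
/- Every Giuga number is a prime power Giuga number. -/
lemma giuga_squarefree {n : ℕ} (h : Giuga n) : Squarefree n := by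
  obtain ⟨h1, hnp, m, hm, heq⟩ := h
  have hn0 : 0 < n := by omega
  have hnQ : (n:ℚ) ≠ 0 := by exact_mod_cast hn0.ne'
  have key : ∑ p ∈ n.primeFactors, n / p = m * n + 1 := by
    have hQ : ((∑ p ∈ n.primeFactors, n / p : ℕ) : ℚ) = ((m * n + 1 : ℕ) : ℚ) := by
      rw [Nat.cast_sum,
        Finset.sum_congr rfl (fun p hp => Nat.cast_div (Nat.dvd_of_mem_primeFactors hp)
          (by exact_mod_cast (Nat.pos_of_mem_primeFactors hp).ne'))]
      have hS : (∑ p ∈ n.primeFactors, (1:ℚ)/p) = m + 1/n := by linarith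
      push_cast
      calc ∑ p ∈ n.primeFactors, (n:ℚ)/p
          = (n:ℚ) * ∑ p ∈ n.primeFactors, (1:ℚ)/p := by
            rw [Finset.mul_sum]; exact Finset.sum_congr rfl fun p _ => by ring
        _ = (n:ℚ) * (m + 1/n) := by rw [hS]
        _ = m * n + 1 := by field_simp
    exact_mod_cast hQ
  rw [Nat.squarefree_iff_prime_squarefree]
  rintro p hp ⟨c, hc⟩
  have hpn : p ∣ n := dvd_trans (dvd_mul_right p p) ⟨c, hc⟩
  have hd : ∀ q ∈ n.primeFactors, p ∣ n / q := by
    intro q hq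
    have hqn := Nat.dvd_of_mem_primeFactors hq
    have hq' := Nat.prime_of_mem_primeFactors hq
    rcases eq_or_ne q p with rfl | hne
    · refine ⟨c, ?_⟩
      rw [hc, mul_assoc, Nat.mul_div_cancel_left _ hp.pos]
    · have hmul : q * (n / q) = n := Nat.mul_div_cancel' hqn
      have hpd : p ∣ q * (n / q) := by rw [hmul]; exact hpn
      exact (hp.dvd_mul.mp hpd).resolve_left
        (fun hdq => hne ((Nat.prime_dvd_prime_iff_eq hp hq').mp hdq).symm)
  have hps : p ∣ ∑ q ∈ n.primeFactors, n / q := Finset.dvd_sum hd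
  rw [key] at hps
  have h1' : p ∣ 1 := (Nat.dvd_add_right (Dvd.dvd.mul_left hpn m)).mp hps
  exact absurd (Nat.dvd_one.mp h1') hp.one_lt.ne'

lemma filter_eq {n : ℕ} (hn : 0 < n) (hsq : Squarefree n) :
    n.divisors.filter (fun d => IsPrimePow d) = n.primeFactors := by
  ext d
  simp only [Finset.mem_filter, Nat.mem_divisors, Nat.mem_primeFactors]
  constructor
  · rintro ⟨⟨hdn, hn0⟩, hpp⟩
    obtain ⟨p, k, hp, hk, rfl⟩ := hpp
    have hk1 : k = 1 := by
      by_contra hk1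
      have : p * p ∣ p ^ k := by
        have : p ^ 2 ∣ p ^ k := pow_dvd_pow p (by omega)
        simpa [sq] using this
      exact (Nat.squarefree_iff_prime_squarefree.mp hsq p hp.nat_prime)
        (this.trans hdn)
    subst hk1
    simp only [pow_one] at hdn ⊢
    exact ⟨hp.nat_prime, hdn, hn.ne'⟩
  · rintro ⟨hp, hdn, hn0⟩
    exact ⟨⟨hdn, hn0⟩, hp.isPrimePow⟩

/-- every Giuga number is a prime power Giuga number. -/
theorem stmt12 (n : ℕ) (h : Giuga n) : PPGiuga n := by
  obtain ⟨h1, hnp, m, hm, heq⟩ := h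
  refine ⟨h1, hnp, m, hm, ?_⟩
  rw [ppSum, filter_eq (by omega) (giuga_squarefree ⟨h1, hnp, m, hm, heq⟩)]
  exact heq
end

section
/- Every prime power pseudoperfect number that is not a power of 2 is a pseudoperfect number. -/
/-!
Multiplying `∑_{p^k ∣ n} 1/p^k + 1/n = 1` by `n` gives `∑_{p^k ∣ n} n / p^k = n - 1`.
If `n` is not a prime power, the cofactors `n / p^k`, together with `1 = n / n`, are distinct
proper divisors of `n` summing to `n`. If `n = p^k`, every cofactor except `p^k / p^k = 1` is
divisible by `p`, so `p ∣ (p^k - 1) - 1`, which forces `p = 2`.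
-/

open Finset

def primePowDivisors (n : ℕ) : Finset ℕ := n.divisors.filter IsPrimePow

lemma Nat.div_mem_properDivisors {n d : ℕ} (hd : d ∈ n.divisors) (h1 : 1 < d) :
    n / d ∈ n.properDivisors := by
  obtain ⟨hdvd, hn⟩ := Nat.mem_divisors.mp hd
  exact Nat.mem_properDivisors.mpr
    ⟨Nat.div_dvd_of_dvd hdvd, Nat.div_lt_self (Nat.pos_of_ne_zero hn) h1⟩

lemma Nat.injOn_div_divisors (n : ℕ) : Set.InjOn (n / ·) n.divisors := by
  intro x hx y hy hxy
  rw [mem_coe, Nat.mem_divisors] at hx hy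
  exact (Nat.div_eq_iff_eq_of_dvd_dvd hx.2 hx.1 hy.1).mp hxy

lemma Nat.Prime.dvd_pow_div_of_dvd_of_ne {p k d : ℕ} (hp : p.Prime) (hd : d ∣ p ^ k)
    (hne : d ≠ p ^ k) : p ∣ p ^ k / d := by
  obtain ⟨m, hmk, rfl⟩ := (Nat.dvd_prime_pow hp).mp hd
  have hmk : m < k := lt_of_le_of_ne hmk (by rintro rfl; exact hne rfl)
  rw [Nat.pow_div hmk.le hp.pos]
  exact dvd_pow_self p (by omega)

namespace PPPseudoperfect

lemma sum_div_primePowDivisors {n : ℕ} (h : PPPseudoperfect n) :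
    ∑ d ∈ primePowDivisors n, n / d = n - 1 := by
  obtain ⟨hn, hsum⟩ := h
  have hn0 : (n : ℚ) ≠ 0 := by positivity
  have hcast : ((∑ d ∈ primePowDivisors n, n / d : ℕ) : ℚ) = n * ppSum n := by
    rw [Nat.cast_sum, ppSum, mul_sum]
    refine sum_congr rfl fun d hd => ?_
    obtain ⟨hd, hpp⟩ := mem_filter.mp hd
    rw [Nat.cast_div (Nat.dvd_of_mem_divisors hd) (by exact_mod_cast hpp.ne_zero)]
    ring
  have hrat : ((∑ d ∈ primePowDivisors n, n / d : ℕ) : ℚ) = ((n - 1 : ℕ) : ℚ) := by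
    rw [hcast, Nat.cast_sub hn.le, Nat.cast_one, eq_sub_of_add_eq hsum]
    field_simp
  exact_mod_cast hrat

lemma eq_two_of_eq_prime_pow {p k : ℕ} (hp : p.Prime) (h : PPPseudoperfect (p ^ k)) : p = 2 := by
  have hpk : 1 < p ^ k := h.1
  have hk : k ≠ 0 := by rintro rfl; simp at hpk
  have hself : p ^ k ∈ primePowDivisors (p ^ k) :=
    mem_filter.mpr ⟨Nat.mem_divisors_self _ (by omega), hp.prime.isPrimePow.pow hk⟩
  have hsum := h.sum_div_primePowDivisors
  rw [← add_sum_erase _ _ hself, Nat.div_self (by omega)] at hsum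
  have hrest : ∑ d ∈ (primePowDivisors (p ^ k)).erase (p ^ k), p ^ k / d = p ^ k - 2 := by
    omega
  have hdvd : p ∣ p ^ k - 2 :=
    hrest ▸ dvd_sum fun d hd => hp.dvd_pow_div_of_dvd_of_ne
      (Nat.dvd_of_mem_divisors (mem_filter.mp (mem_of_mem_erase hd)).1) (ne_of_mem_erase hd)
  have hp2 : p ∣ 2 := by
    have := Nat.dvd_sub (dvd_pow_self p hk) hdvd
    rwa [show p ^ k - (p ^ k - 2) = 2 by omega] at this
  exact (Nat.prime_dvd_prime_iff_eq hp Nat.prime_two).mp hp2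

lemma pseudoperfect_of_not_isPrimePow {n : ℕ} (h : PPPseudoperfect n) (hnp : ¬ IsPrimePow n) :
    Pseudoperfect n := by
  have hn : 1 < n := h.1
  set D := insert n (primePowDivisors n)
  have hD : ∀ d ∈ D, d ∈ n.divisors ∧ 1 < d := by
    intro d hd
    rcases mem_insert.mp hd with rfl | hd
    · exact ⟨Nat.mem_divisors_self _ (by omega), hn⟩
    · obtain ⟨hd, hpp⟩ := mem_filter.mp hd
      exact ⟨hd, hpp.one_lt⟩
  refine ⟨by omega, D.image (n / ·), fun x hx => ?_, (insert_nonempty _ _).image _, ?_⟩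
  · obtain ⟨d, hd, rfl⟩ := mem_image.mp hx
    exact Nat.div_mem_properDivisors (hD d hd).1 (hD d hd).2
  · have hinj : Set.InjOn (n / ·) D :=
      (Nat.injOn_div_divisors n).mono fun d hd => (hD d hd).1
    have hnD : n ∉ primePowDivisors n := fun hmem => hnp (mem_filter.mp hmem).2
    rw [sum_image hinj, sum_insert hnD, Nat.div_self (by omega), h.sum_div_primePowDivisors]
    omega

end PPPseudoperfect

/-- every prime power pseudoperfect number that is not a power of `2`
is a pseudoperfect number. -/
theorem stmt13 (n : ℕ) (h : PPPseudoperfect n) (h2 : ¬ ∃ k : ℕ, n = 2 ^ k) :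
    Pseudoperfect n := by
  refine h.pseudoperfect_of_not_isPrimePow fun ⟨p, k, hp, _, hpk⟩ => h2 ⟨k, ?_⟩
  subst hpk
  rw [h.eq_two_of_eq_prime_pow hp.nat_prime]
end

section
/- If k is a positive integer such that 2^k − 1 is prime, then n = 2^k (2^k − 1) is a prime power Giuga number; in fact ∑_{p^j ∣ n} 1/p^j − 1/n = 1, where the sum ranges over all prime power divisors p^j of n. -/

lemma geomHalf (k : ℕ) : ∑ j ∈ Finset.range k, (1 : ℚ) / 2 ^ (j + 1) = 1 - 1 / 2 ^ k := by
  induction k with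
  | zero => simp
  | succ n ih =>
      rw [Finset.sum_range_succ, ih, pow_succ]
      field_simp
      ring

/-- if `2^k - 1` is prime (`k ≥ 1`), then `n = 2^k (2^k - 1)` satisfies
`∑_{p^j ∣ n} 1/p^j - 1/n = 1`; in particular `n` is a prime power Giuga number. -/
theorem stmt15 (k : ℕ) (hk : 0 < k) (hp : (2 ^ k - 1 : ℕ).Prime) :
    ppSum (2 ^ k * (2 ^ k - 1)) - 1 / ((2 ^ k * (2 ^ k - 1) : ℕ) : ℚ) = 1 ∧
      PPGiuga (2 ^ k * (2 ^ k - 1)) := by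
  set q : ℕ := 2 ^ k - 1 with hq
  have hk2 : 2 ≤ k := by
    by_contra h
    have hk1 : k = 1 := by omega
    subst hk1
    rw [hq] at hp
    norm_num at hp
  have h2k : 4 ≤ 2 ^ k := by calc (4:ℕ) = 2 ^ 2 := by norm_num
                                  _ ≤ 2 ^ k := Nat.pow_le_pow_right (by norm_num) hk2
  have hq1 : q + 1 = 2 ^ k := by
    have : 1 ≤ 2 ^ k := Nat.one_le_two_pow
    omega
  have hq3 : 3 ≤ q := by omega
  have hqodd : Odd q := by
    have : 2 ∣ 2 ^ k := dvd_pow_self 2 (by omega)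
    rcases this with ⟨c, hc⟩
    exact ⟨c - 1, by omega⟩
  have hqne : ¬ (2 ∣ q) := by
    intro h
    exact (Nat.not_even_iff_odd.mpr hqodd) (even_iff_two_dvd.mpr h)
  have hcop : Nat.Coprime (2 ^ k) q :=
    Nat.Coprime.pow_left k ((Nat.coprime_primes Nat.prime_two hp).mpr (by omega))
  have hn0 : 2 ^ k * q ≠ 0 := by positivity
  -- characterize the prime power divisors
  have hfilter : (2 ^ k * q).divisors.filter (fun d => IsPrimePow d)
      = (Finset.range k).image (fun j => 2 ^ (j + 1)) ∪ {q} := by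
    ext d
    simp only [Finset.mem_filter, Nat.mem_divisors, Finset.mem_union, Finset.mem_image,
      Finset.mem_range, Finset.mem_singleton]
    constructor
    · rintro ⟨⟨hdvd, -⟩, hpp⟩
      rcases hpp with ⟨p, a, hpprime, ha, rfl⟩
      have hpn : p.Prime := hpprime.nat_prime
      by_cases hp2 : p = 2
      · subst hp2
        have h2q : Nat.Coprime (2 ^ a) q := Nat.Coprime.pow_left a
          ((Nat.coprime_primes Nat.prime_two hp).mpr (by omega))
        have : 2 ^ a ∣ 2 ^ k := (Nat.Coprime.dvd_of_dvd_mul_right h2q) hdvd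
        have hak : a ≤ k := (Nat.pow_dvd_pow_iff_le_right (by norm_num)).mp this
        left
        exact ⟨a - 1, by omega, by rw [Nat.sub_add_cancel ha]⟩
      · right
        have hcop2 : Nat.Coprime (p ^ a) (2 ^ k) :=
          Nat.Coprime.pow a k ((Nat.coprime_primes hpn Nat.prime_two).mpr hp2)
        have hdq : p ^ a ∣ q := (Nat.Coprime.dvd_of_dvd_mul_left hcop2) hdvd
        rcases (Nat.dvd_prime hp).mp hdq with h1 | h1
        · exact absurd h1 (by
            have : 2 ≤ p := hpn.two_le
            have : 2 ≤ p ^ a := le_trans this (Nat.le_self_pow (by omega) p)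
            omega)
        · exact h1
    · rintro (⟨j, hj, rfl⟩ | rfl)
      · refine ⟨⟨dvd_mul_of_dvd_left (pow_dvd_pow 2 (by omega)) q, hn0⟩, ?_⟩
        exact ⟨2, j + 1, Nat.prime_two.prime, by omega, rfl⟩
      · exact ⟨⟨dvd_mul_left q _, hn0⟩, hp.prime.isPrimePow⟩
  have hqnotim : q ∉ (Finset.range k).image (fun j => 2 ^ (j + 1)) := by
    simp only [Finset.mem_image, Finset.mem_range]
    rintro ⟨j, -, hjq⟩
    exact hqne (hjq ▸ dvd_pow_self 2 (by omega : j + 1 ≠ 0))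
  have hinj : Set.InjOn (fun j => 2 ^ (j + 1)) (Finset.range k) := by
    intro a _ b _ hab
    simpa using Nat.pow_right_injective (le_refl 2) hab
  have hsum : ppSum (2 ^ k * q) = (1 - 1 / 2 ^ k) + 1 / q := by
    rw [ppSum, hfilter, Finset.sum_union (by
      simp only [Finset.disjoint_singleton_right]; exact hqnotim),
      Finset.sum_image hinj, Finset.sum_singleton]
    rw [← geomHalf k]
    norm_num
  have hcast : ((2 ^ k * q : ℕ) : ℚ) = 2 ^ k * q := by push_cast; ring
  have hqQ : (q : ℚ) = 2 ^ k - 1 := by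
    have h : (q : ℚ) + 1 = 2 ^ k := by exact_mod_cast hq1
    linarith
  have hq0 : (q : ℚ) ≠ 0 := by
    have : (3:ℚ) ≤ q := by exact_mod_cast hq3
    linarith
  have h2k0 : (2:ℚ) ^ k ≠ 0 := by positivity
  have hmain : ppSum (2 ^ k * q) - 1 / ((2 ^ k * q : ℕ) : ℚ) = 1 := by
    rw [hsum, hcast]
    field_simp
    rw [hqQ]; ring
  refine ⟨hmain, ⟨?_, ?_, 1, one_pos, by rw [Nat.cast_one]; exact hmain⟩⟩
  · calc 1 < 2 ^ k := by omega
        _ ≤ 2 ^ k * q := Nat.le_mul_of_pos_right _ (by omega)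
  · exact Nat.not_prime_mul (by omega) (by omega)
end

section
/- If n = p^a where p is an odd prime and a is a positive integer, then F_n ≠ D_n. Consequently, the powers of 2 are the only integers n > 1 with exactly one distinct prime divisor satisfying F_n = D_n. -/
lemma egf_pow_key (p a : ℕ) (hp : p.Prime) (hp2 : p ≠ 2) (ha : 0 < a) :
    0 < egf (p ^ a) ∧ 2 ∣ egf (p ^ a) := by
  have hodd : Odd p := hp.odd_of_ne_two hp2
  have hoddpa : Odd (p ^ a) := hodd.pow
  have hp3 : 3 ≤ p := by
    have h1 := hp.two_le
    have h2 := Nat.odd_iff.mp hodd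
    omega
  have hle : p ≤ p ^ a := Nat.le_self_pow ha.ne' p
  unfold egf
  split_ifs with hpr
  · rw [Nat.odd_iff] at hoddpa
    refine ⟨by omega, by omega⟩
  · have hmin : (p ^ a).minFac = p := hp.pow_minFac ha.ne'
    have hdiv : p ^ a / p = p ^ (a - 1) := by
      conv_lhs => rw [show a = (a - 1) + 1 by omega, pow_succ]
      exact Nat.mul_div_cancel _ hp.pos
    rw [hmin, hdiv]
    have hlt : p ^ (a - 1) < p ^ a := Nat.pow_lt_pow_right hp.one_lt (by omega)
    have hodd' : Odd (p ^ (a - 1)) := hodd.pow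
    rw [Nat.odd_iff] at hoddpa hodd'
    refine ⟨by omega, by omega⟩

/-- if `n = p^a` for an odd prime `p` and `a ≥ 1`, then `F n ≠ D n`;
consequently the powers of `2` are the only integers `n > 1` with exactly one distinct
prime divisor satisfying `F n = D n`. -/
theorem stmt17 :
    (∀ p a : ℕ, p.Prime → p ≠ 2 → 0 < a →
      Fset (p ^ a) ≠ (((p ^ a : ℕ)).divisors : Set ℕ)) ∧
    (∀ n : ℕ, 1 < n → n.primeFactors.card = 1 →
      Fset n = (n.divisors : Set ℕ) → ∃ k : ℕ, n = 2 ^ k) := by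
  have main : ∀ p a : ℕ, p.Prime → p ≠ 2 → 0 < a →
      Fset (p ^ a) ≠ (((p ^ a : ℕ)).divisors : Set ℕ) := by
    intro p a hp hp2 ha h
    obtain ⟨hpos, hdvd⟩ := egf_pow_key p a hp hp2 ha
    have hmem : egf (p ^ a) ∈ Fset (p ^ a) := ⟨hpos, 1, rfl⟩
    rw [h] at hmem
    simp only [Finset.coe_sort_coe, Finset.mem_coe, Nat.mem_divisors] at hmem
    have h2 : (2 : ℕ) ∣ p ^ a := hdvd.trans hmem.1
    have h2p : (2 : ℕ) ∣ p := Nat.Prime.dvd_of_dvd_pow Nat.prime_two h2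
    exact hp2 ((Nat.prime_dvd_prime_iff_eq Nat.prime_two hp).mp h2p).symm
  refine ⟨main, ?_⟩
  intro n hn hcard hF
  have hpp : IsPrimePow n := isPrimePow_iff_card_primeFactors_eq_one.mpr hcard
  obtain ⟨p, k, hp, hk, rfl⟩ := hpp
  rw [← Nat.prime_iff] at hp
  by_cases hp2 : p = 2
  · exact ⟨k, by rw [hp2]⟩
  · exact absurd hF (main p k hp hp2 hk)
end

section
/- If n > 1 satisfies F_n = D_n and n has exactly two distinct prime divisors, then there exist positive integers k and j such that n = 2^k (2^k + 1)^j and 2^k + 1 is prime (i.e., 2^k + 1 is a Fermat prime). -/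
lemma egf_iterate_le (t m : ℕ) : egf^[t] m ≤ m := by
  induction t with
  | zero => simp
  | succ t ih => rw [Function.iterate_succ_apply']; exact le_trans (egf_le _) ih

lemma chain_le {n x y : ℕ} (hx : x ∈ Fset n) (hy : y ∈ Fset n) (hlt : y < x) :
    y ≤ egf x := by
  obtain ⟨hx0, i, hi⟩ := hx
  obtain ⟨hy0, j, hj⟩ := hy
  rcases le_or_gt j i with hji | hij
  · exfalso
    have h1 : egf^[i] n = egf^[i - j] (egf^[j] n) := by
      rw [← Function.iterate_add_apply, Nat.sub_add_cancel hji]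
    rw [hj] at h1
    have h2 := egf_iterate_le (i - j) y
    omega
  · have h1 : egf^[j] n = egf^[j - (i+1)] (egf (egf^[i] n)) := by
      rw [← Function.iterate_succ_apply' egf i n, ← Function.iterate_add_apply,
        Nat.sub_add_cancel hij]
    rw [hi, hj] at h1
    have h2 := egf_iterate_le (j - (i+1)) (egf x)
    omega

lemma dvd_le_helper {n d : ℕ} (hd : d ∣ n) (hlt : d < n) :
    d * n.minFac ≤ n := by
  obtain ⟨c, hc⟩ := hd
  have hd0 : 0 < d := by
    rcases Nat.eq_zero_or_pos d with h | h
    · subst h; simp at hc; omega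
    · exact h
  have hc1 : 2 ≤ c := by
    rcases Nat.lt_or_ge c 2 with h | h
    · interval_cases c <;> omega
    · exact h
  have hmf : n.minFac ≤ c := Nat.minFac_le_of_dvd hc1 ⟨d, by rw [hc, mul_comm]⟩
  calc d * n.minFac ≤ d * c := Nat.mul_le_mul_left _ hmf
    _ = n := hc.symm


/-- if `n > 1` satisfies `F n = D n` and `n` has exactly two distinct
prime divisors, then `n = 2^k (2^k + 1)^j` for some positive integers `k, j`, where
`2^k + 1` is (a Fermat) prime. -/
theorem stmt18 (n : ℕ) (hn : 1 < n) (h : Fset n = (n.divisors : Set ℕ))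
    (h2 : n.primeFactors.card = 2) :
    ∃ k j : ℕ, 0 < k ∧ 0 < j ∧ n = 2 ^ k * (2 ^ k + 1) ^ j ∧
      (2 ^ k + 1 : ℕ).Prime := by
  have hn0 : n ≠ 0 := by omega
  have hnp : ¬ n.Prime := by
    intro hp
    rw [hp.primeFactors] at h2
    simp at h2
  have hmemF : ∀ m, m ∣ n → 0 < m → m ∈ Fset n := fun m hm hm0 => by
    rw [h]; exact Finset.mem_coe.mpr (Nat.mem_divisors.mpr ⟨hm, hn0⟩)
  have hFdvd : ∀ m, m ∈ Fset n → m ∣ n := fun m hm => by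
    rw [h] at hm; exact (Nat.mem_divisors.mp (Finset.mem_coe.mp hm)).1
  -- Step 1: minFac n = 2
  have hq := Nat.minFac_prime (by omega : n ≠ 1)
  have hqd : n.minFac ∣ n := Nat.minFac_dvd n
  have hq2 : 2 ≤ n.minFac := hq.two_le
  have hdivpos : 0 < n / n.minFac := Nat.div_pos (Nat.minFac_le (by omega)) (by omega)
  have hdivlt : n / n.minFac < n := Nat.div_lt_self (by omega) (by omega)
  have hen : egf n = n - n / n.minFac := by rw [egf, if_neg hnp]
  have henF : egf n ∈ Fset n := ⟨by omega, 1, by simp⟩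
  have hend : egf n ∣ n := hFdvd _ henF
  have henlt : egf n < n := by omega
  have hle := dvd_le_helper hend henlt
  have hnq : n / n.minFac * n.minFac = n := Nat.div_mul_cancel hqd
  have hqeq2 : n.minFac = 2 := by
    have h1 : (n - n / n.minFac) * n.minFac = n * n.minFac - n := by
      rw [Nat.sub_mul, hnq]
    rw [hen] at hle
    have h3 : n * n.minFac ≤ n * 2 := by omega
    have := Nat.le_of_mul_le_mul_left h3 (by omega : 0 < n)
    omega
  -- Step 2: primeFactors n = {2, p}
  have h2mem : 2 ∈ n.primeFactors :=
    Nat.mem_primeFactors.mpr ⟨Nat.prime_two, by rw [← hqeq2]; exact hqd, hn0⟩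
  obtain ⟨a, b, hab, hset⟩ := Finset.card_eq_two.mp h2
  have hor : 2 = a ∨ 2 = b := by rw [hset] at h2mem; simpa using h2mem
  obtain ⟨p, hpne2, hset'⟩ : ∃ p, p ≠ 2 ∧ n.primeFactors = {2, p} := by
    rcases hor with h' | h'
    · exact ⟨b, by omega, by rw [hset, ← h']⟩
    · exact ⟨a, by omega, by rw [hset, ← h', Finset.pair_comm]⟩
  have hpmem : p ∈ n.primeFactors := by rw [hset']; simp
  obtain ⟨hpp, hpd, -⟩ := Nat.mem_primeFactors.mp hpmem
  have hp3 : 3 ≤ p := by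
    have := hpp.two_le
    omega
  -- Step 3: n = 2^A * p^B
  set A := n.factorization 2 with hA
  set B := n.factorization p with hB
  have hfact : n = 2 ^ A * p ^ B := by
    have h1 := Nat.factorization_prod_pow_eq_self hn0
    rw [Finsupp.prod, Nat.support_factorization, hset',
      Finset.prod_pair (by omega : (2:ℕ) ≠ p)] at h1
    exact h1.symm
  have hBpos : 0 < B := by
    have : n.factorization p ≠ 0 := by
      rw [← Finsupp.mem_support_iff, Nat.support_factorization]; exact hpmem
    omega
  -- Step 4: p - 1 = 2^k
  obtain ⟨-, i, hi⟩ := hmemF p hpd (by omega)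
  have hp1F : p - 1 ∈ Fset n :=
    ⟨by omega, i + 1, by rw [Function.iterate_succ_apply', hi, egf, if_pos hpp]⟩
  have hp1d : p - 1 ∣ n := hFdvd _ hp1F
  have hcop : (p - 1).Coprime (p ^ B) := by
    have h' : (p - 1).Coprime p := by
      have he : p - 1 + 1 = p := by omega
      conv_rhs => rw [← he]
      simp
    exact h'.pow_right B
  have hp1d2 : p - 1 ∣ 2 ^ A := by
    rw [hfact] at hp1d
    exact (Nat.Coprime.dvd_of_dvd_mul_right hcop hp1d)
  obtain ⟨k, hkA, hpk⟩ := (Nat.dvd_prime_pow Nat.prime_two).mp hp1d2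
  have hkpos : 0 < k := by
    rcases Nat.eq_zero_or_pos k with h' | h'
    · subst h'; simp at hpk; omega
    · exact h'
  -- Step 5: A = k
  have hAk : A = k := by
    by_contra hne
    have hkA' : k + 1 ≤ A := by omega
    have hdvd : (2 : ℕ) ^ (k + 1) ∣ n := by
      rw [hfact]; exact dvd_mul_of_dvd_left (pow_dvd_pow 2 hkA') _
    have h2kF : (2 : ℕ) ^ (k + 1) ∈ Fset n := hmemF _ hdvd (by positivity)
    have hpF : p ∈ Fset n := hmemF p hpd (by omega)
    have h2k2 : (2:ℕ) ≤ 2 ^ k := by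
      calc (2:ℕ) = 2 ^ 1 := by norm_num
        _ ≤ 2 ^ k := Nat.pow_le_pow_right (by norm_num) hkpos
    have hpow : (2:ℕ) ^ (k+1) = 2 ^ k * 2 := by rw [pow_succ]
    have hplt : p < 2 ^ (k + 1) := by omega
    have hchain := chain_le h2kF hpF hplt
    have hnotp : ¬ ((2:ℕ) ^ (k+1)).Prime := by
      intro hpr
      rcases hpr.eq_one_or_self_of_dvd 2 (dvd_pow_self 2 (Nat.succ_ne_zero k)) with h' | h'
      · omega
      · omega
    have hmf : ((2:ℕ) ^ (k+1)).minFac = 2 := by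
      have h1 : ((2:ℕ) ^ (k+1)).minFac ≤ 2 :=
        Nat.minFac_le_of_dvd le_rfl (dvd_pow_self 2 (Nat.succ_ne_zero k))
      have h2' : 2 ≤ ((2:ℕ) ^ (k+1)).minFac :=
        (Nat.minFac_prime (by omega : (2:ℕ)^(k+1) ≠ 1)).two_le
      omega
    have hegf : egf (2 ^ (k+1)) = 2 ^ k := by
      rw [egf, if_neg hnotp, hmf, hpow, Nat.mul_div_cancel _ (by norm_num)]
      omega
    rw [hegf] at hchain
    omega
  have hp2k : p = 2 ^ k + 1 := by omega
  refine ⟨k, B, hkpos, hBpos, ?_, ?_⟩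
  · rw [hfact, hAk, ← hp2k]
  · rw [← hp2k]; exact hpp
end
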